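/- Let n > 0 be even and j, k ∈ {1,...,n}. With β_{j,l} the antisymmetric matrix satisfying β_{l,l+1} = √(2l), β_{j,l} = 0 for |j-l| ≠ 1, and α_{l,k} as defined from the oscillator wave functions, one has ∑_{l=1}^n β_{j,l} α_{l,k} = -4 δ_{jk}. -/

import Mathlib

open MeasureTheory

/-- Physicists' Hermite polynomials. -/
noncomputable def hermiteP : ℕ → ℝ → ℝ
  | 0 => fun _ => 1
  | 1 => fun x => 2 * x
  | (n + 2) => fun x => 2 * x * hermiteP (n + 1) x - 2 * ((n : ℝ) + 1) * hermiteP n x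

/-- The oscillator wave functions `φ_j(x) = (2^j j! √π)^{-1/2} e^{-x²/2} H_j(x)`. -/
noncomputable def phi (j : ℕ) (x : ℝ) : ℝ :=
  (Real.sqrt (2 ^ j * (j.factorial : ℝ) * Real.sqrt Real.pi))⁻¹ *
    Real.exp (-x ^ 2 / 2) * hermiteP j x

/-- `α_{j,k} = ∫∫ φ_{k-1}(x) φ_{j-1}(y) sgn(x-y) dx dy` for `j, k ≥ 1`,
with the convention `α_{0,k} = α_{j,0} = 0`. -/
noncomputable def alph (j k : ℕ) : ℝ :=
  if j = 0 ∨ k = 0 then 0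
  else ∫ y : ℝ, ∫ x : ℝ, phi (k - 1) x * phi (j - 1) y * Real.sign (x - y)

/-- `β_{j,k}` (1-based): `β_{l,l+1} = √(2l) = -β_{l+1,l}`, and `0` for `|j-k| ≠ 1`. -/
noncomputable def bet (j k : ℕ) : ℝ :=
  if k = j + 1 then Real.sqrt (2 * j)
  else if j = k + 1 then -Real.sqrt (2 * k)
  else 0

/-!
Write `α_{a+1,m+1} = ∫ φ_a F_m` with `F_m(y) = ∫ φ_m(x) sgn(x - y) dx`, so that
`F_m' = -2 φ_m`. The ladder relation `√(2(a+1)) φ_{a+1} - √(2a) φ_{a-1} = -2 φ_a'`, an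
integration by parts and the orthonormality of the `φ_a` give
`√(2(a+1)) α_{a+2,k} - √(2a) α_{a,k} = -4 δ_{a+1,k}`, which is the sum as soon as the one term
it lacks, `α_{n+1,k}`, vanishes. For even `n` it does: `α_{n+1,1} = 0` because `φ_n` is even and
`F_0` is odd, and the ladder relation inside `F` expresses `F_{i+1}` through `F_{i-1}` and `φ_i`,
so that `α_{n+1,k+2}` reduces to `α_{n+1,k}` and `⟨φ_n, φ_k⟩ = 0`.
-/

open Real Polynomial Set

theorem integral_eq_zero_of_odd {f : ℝ → ℝ} (hf : f.Odd) : ∫ x, f x = 0 := by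
  have h := integral_neg_eq_self f volume
  simp only [hf.eq, integral_neg] at h
  linarith

theorem integrable_eval_mul_exp_neg_mul_sq (p : ℝ[X]) {b : ℝ} (hb : 0 < b) :
    Integrable fun x : ℝ => p.eval x * exp (-b * x ^ 2) := by
  simp_rw [eval_eq_sum_range, Finset.sum_mul]
  refine integrable_finsetSum _ fun i _ => ?_
  have := integrable_rpow_mul_exp_neg_mul_sq hb (s := i) (neg_one_lt_zero.trans_le i.cast_nonneg)
  simpa [mul_assoc, Real.rpow_natCast] using this.const_mul (p.coeff i)

theorem Real.measurable_sign : Measurable Real.sign :=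
  Measurable.ite measurableSet_Iio measurable_const
    (Measurable.ite measurableSet_Ioi measurable_const measurable_const)

theorem Real.norm_sign_le_one (r : ℝ) : ‖Real.sign r‖ ≤ 1 := by
  rcases Real.sign_apply_eq r with h | h | h <;> simp [h]

section SignIntegral

variable {f : ℝ → ℝ}

noncomputable def signIntegral (f : ℝ → ℝ) (y : ℝ) : ℝ := ∫ x, f x * Real.sign (x - y)

theorem integrable_mul_sign_sub (hf : Integrable f) (y : ℝ) :
    Integrable fun x => f x * Real.sign (x - y) :=
  hf.mul_bdd (measurable_sign.comp (measurable_id.sub_const y)).aestronglyMeasurable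
    (ae_of_all _ fun _ => norm_sign_le_one _)

theorem signIntegral_eq (hf : Integrable f) (y : ℝ) :
    signIntegral f y = (∫ x, f x) - 2 * ∫ x in Iic y, f x := by
  have hsplit {g : ℝ → ℝ} (hg : Integrable g) :
      ∫ x, g x = (∫ x in Iic y, g x) + ∫ x in Ioi y, g x :=
    (intervalIntegral.integral_Iic_add_Ioi hg.integrableOn hg.integrableOn).symm
  have hleft : ∫ x in Iic y, f x * Real.sign (x - y) = -∫ x in Iic y, f x := by
    rw [integral_Iic_eq_integral_Iio, integral_Iic_eq_integral_Iio, ← integral_neg]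
    refine setIntegral_congr_fun measurableSet_Iio fun x hx => ?_
    simp [Real.sign_of_neg (sub_neg.2 (mem_Iio.1 hx))]
  have hright : ∫ x in Ioi y, f x * Real.sign (x - y) = ∫ x in Ioi y, f x := by
    refine setIntegral_congr_fun measurableSet_Ioi fun x hx => ?_
    simp [Real.sign_of_pos (sub_pos.2 (mem_Ioi.1 hx))]
  rw [signIntegral, hsplit (integrable_mul_sign_sub hf y), hsplit hf, hleft, hright]
  ring

theorem hasDerivAt_signIntegral (hf : Integrable f) (hc : Continuous f) (y : ℝ) :
    HasDerivAt (signIntegral f) (-2 * f y) y := by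
  have hIic (z : ℝ) :
      ∫ x in Iic z, f x = (∫ x in Iic 0, f x) + ∫ x in (0 : ℝ)..z, f x := by
    rw [← intervalIntegral.integral_Iic_sub_Iic hf.integrableOn hf.integrableOn]
    ring
  have hF : signIntegral f =
      fun z => (∫ x, f x) - 2 * ((∫ x in Iic 0, f x) + ∫ x in (0 : ℝ)..z, f x) :=
    funext fun z => by rw [signIntegral_eq hf, hIic]
  rw [hF]
  exact (((hc.integral_hasStrictDerivAt 0 y).hasDerivAt.const_add _).const_mul 2).const_sub _
    |>.congr_deriv (by ring)

theorem continuous_signIntegral (hf : Integrable f) (hc : Continuous f) :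
    Continuous (signIntegral f) :=
  continuous_iff_continuousAt.2 fun y => (hasDerivAt_signIntegral hf hc y).continuousAt

theorem norm_signIntegral_le (hf : Integrable f) (y : ℝ) :
    ‖signIntegral f y‖ ≤ ∫ x, ‖f x‖ :=
  norm_integral_le_of_norm_le hf.norm <| ae_of_all _ fun x => by
    simpa [norm_mul] using mul_le_of_le_one_right (norm_nonneg (f x)) (norm_sign_le_one (x - y))

theorem integrable_mul_signIntegral {g : ℝ → ℝ} (hg : Integrable g) (hf : Integrable f)
    (hc : Continuous f) : Integrable fun y => g y * signIntegral f y :=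
  hg.mul_bdd (continuous_signIntegral hf hc).aestronglyMeasurable
    (ae_of_all _ (norm_signIntegral_le hf))

theorem signIntegral_of_hasDerivAt {f' : ℝ → ℝ} (hderiv : ∀ x, HasDerivAt f (f' x) x)
    (hf : Integrable f) (hf' : Integrable f') (y : ℝ) : signIntegral f' y = -2 * f y := by
  have htop := tendsto_zero_of_hasDerivAt_of_integrableOn_Ioi (a := 0) (fun x _ => hderiv x)
    hf'.integrableOn hf.integrableOn
  have hbot := tendsto_zero_of_hasDerivAt_of_integrableOn_Iic (a := 0) (fun x _ => hderiv x)
    hf'.integrableOn hf.integrableOn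
  rw [signIntegral_eq hf', integral_of_hasDerivAt_of_tendsto hderiv hf' hbot htop,
    integral_Iic_of_hasDerivAt_of_tendsto' (fun x _ => hderiv x) hf'.integrableOn hbot]
  ring

theorem Function.Even.signIntegral_odd (hf : f.Even) : (signIntegral f).Odd := fun y => by
  rw [signIntegral, signIntegral, ← integral_neg_eq_self, ← integral_neg]
  congr 1
  funext x
  rw [hf.eq, show -x - -y = -(x - y) by ring, Real.sign_neg, mul_neg]

end SignIntegral

theorem hermiteP_succ (n : ℕ) (x : ℝ) :
    hermiteP (n + 1) x = 2 * x * hermiteP n x - 2 * n * hermiteP (n - 1) x := by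
  cases n <;> simp [hermiteP]

theorem exists_hermiteP_eq_eval (n : ℕ) : ∃ p : ℝ[X], ∀ x, hermiteP n x = p.eval x := by
  induction n using Nat.twoStepInduction with
  | zero => exact ⟨1, fun _ => by simp [hermiteP]⟩
  | one => exact ⟨C 2 * X, fun _ => by simp [hermiteP]⟩
  | more n ih₀ ih₁ =>
    obtain ⟨q, hq⟩ := ih₀
    obtain ⟨p, hp⟩ := ih₁
    exact ⟨C 2 * X * p - C (2 * ((n : ℝ) + 1)) * q, fun x => by simp [hermiteP, hp, hq]⟩

theorem hasDerivAt_hermiteP (n : ℕ) (x : ℝ) :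
    HasDerivAt (hermiteP n) (2 * n * hermiteP (n - 1) x) x := by
  induction n using Nat.twoStepInduction generalizing x with
  | zero => simpa [hermiteP] using hasDerivAt_const x (1 : ℝ)
  | one => simpa [hermiteP] using (hasDerivAt_id x).const_mul (2 : ℝ)
  | more n ih₀ ih₁ =>
    refine ((((hasDerivAt_id x).const_mul 2).mul (ih₁ x)).sub
      ((ih₀ x).const_mul (2 * ((n : ℝ) + 1)))).congr_deriv ?_
    rw [show n + 2 - 1 = n + 1 from rfl, hermiteP_succ n]
    simp only [id, Nat.add_sub_cancel]
    push_cast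
    ring

theorem hermiteP_neg (n : ℕ) (x : ℝ) : hermiteP n (-x) = (-1) ^ n * hermiteP n x := by
  induction n using Nat.twoStepInduction with
  | zero => simp [hermiteP]
  | one => simp [hermiteP]
  | more n ih₀ ih₁ =>
    simp only [hermiteP, ih₀, ih₁]
    ring

noncomputable def phiCoeff (n : ℕ) : ℝ := (√(2 ^ n * n.factorial * √π))⁻¹

theorem phi_eq (n : ℕ) (x : ℝ) : phi n x = phiCoeff n * exp (-x ^ 2 / 2) * hermiteP n x := rfl

theorem phiCoeff_eq_sqrt_mul_succ (n : ℕ) : phiCoeff n = √(2 * (n + 1)) * phiCoeff (n + 1) := by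
  have hfac : (2 : ℝ) ^ (n + 1) * (n + 1).factorial * √π
      = 2 * (n + 1) * (2 ^ n * n.factorial * √π) := by
    push_cast [Nat.factorial_succ]
    ring
  rw [phiCoeff, phiCoeff, hfac, sqrt_mul (x := 2 * ((n : ℝ) + 1)) (by positivity), mul_inv,
    ← mul_assoc, mul_inv_cancel₀ (by positivity), one_mul]

theorem sqrt_mul_phi_succ (n : ℕ) (x : ℝ) :
    √(2 * (n + 1)) * phi (n + 1) x = phiCoeff n * exp (-x ^ 2 / 2) * hermiteP (n + 1) x := by
  rw [phi_eq, phiCoeff_eq_sqrt_mul_succ n]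
  ring

theorem sqrt_mul_phi_pred (n : ℕ) (x : ℝ) :
    √(2 * n) * phi (n - 1) x = phiCoeff n * exp (-x ^ 2 / 2) * (2 * n * hermiteP (n - 1) x) := by
  cases n with
  | zero => simp
  | succ m =>
    have hsq := mul_self_sqrt (show (0 : ℝ) ≤ 2 * (m + 1) by positivity)
    rw [Nat.add_sub_cancel, phi_eq, phiCoeff_eq_sqrt_mul_succ m]
    push_cast
    linear_combination phiCoeff (m + 1) * exp (-x ^ 2 / 2) * hermiteP m x * hsq

-- At `n = 0` the truncated `n - 1` is harmless: its coefficient is `√0 = 0`.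
noncomputable def phiDeriv (n : ℕ) (x : ℝ) : ℝ :=
  (√(2 * n) * phi (n - 1) x - √(2 * (n + 1)) * phi (n + 1) x) / 2

theorem hasDerivAt_phi (n : ℕ) (x : ℝ) : HasDerivAt (phi n) (phiDeriv n x) x := by
  have hexp : HasDerivAt (fun y => exp (-y ^ 2 / 2)) (-x * exp (-x ^ 2 / 2)) x := by
    have h := ((hasDerivAt_pow 2 x).neg.div_const 2).exp
    simp only [Pi.neg_apply] at h
    exact h.congr_deriv (by ring)
  refine ((hexp.const_mul (phiCoeff n)).mul (hasDerivAt_hermiteP n x)).congr_deriv ?_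
  rw [phiDeriv, sqrt_mul_phi_pred, sqrt_mul_phi_succ, hermiteP_succ]
  ring

theorem mul_phi (n : ℕ) (x : ℝ) :
    x * phi n x = (√(2 * n) * phi (n - 1) x + √(2 * (n + 1)) * phi (n + 1) x) / 2 := by
  rw [sqrt_mul_phi_pred, sqrt_mul_phi_succ, hermiteP_succ, phi_eq]
  ring

theorem phi_neg (n : ℕ) (x : ℝ) : phi n (-x) = (-1) ^ n * phi n x := by
  rw [phi_eq, phi_eq, hermiteP_neg, neg_sq]
  ring

theorem continuous_phi (n : ℕ) : Continuous (phi n) :=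
  continuous_iff_continuousAt.2 fun x => (hasDerivAt_phi n x).continuousAt

theorem exists_phi_eq_eval_mul_exp (n : ℕ) :
    ∃ p : ℝ[X], ∀ x, phi n x = p.eval x * exp (-(1 / 2) * x ^ 2) := by
  obtain ⟨p, hp⟩ := exists_hermiteP_eq_eval n
  exact ⟨C (phiCoeff n) * p, fun x => by
    rw [phi_eq, hp, eval_mul, eval_C]
    ring_nf⟩

theorem integrable_phi (n : ℕ) : Integrable (phi n) := by
  obtain ⟨p, hp⟩ := exists_phi_eq_eval_mul_exp n
  simpa only [← hp] using integrable_eval_mul_exp_neg_mul_sq p one_half_pos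

theorem integrable_phi_mul_phi (a b : ℕ) : Integrable fun x => phi a x * phi b x := by
  obtain ⟨p, hp⟩ := exists_phi_eq_eval_mul_exp a
  obtain ⟨q, hq⟩ := exists_phi_eq_eval_mul_exp b
  refine (integrable_eval_mul_exp_neg_mul_sq (p * q) one_pos).congr (ae_of_all _ fun x => ?_)
  beta_reduce
  rw [hp, hq, eval_mul, show -1 * x ^ 2 = -(1 / 2) * x ^ 2 + -(1 / 2) * x ^ 2 by ring, exp_add]
  ring

theorem integrable_phiDeriv (n : ℕ) : Integrable (phiDeriv n) :=
  (((integrable_phi _).const_mul _).sub ((integrable_phi _).const_mul _)).div_const 2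

theorem integrable_phiDeriv_mul_phi (a b : ℕ) : Integrable fun x => phiDeriv a x * phi b x := by
  refine ((((integrable_phi_mul_phi (a - 1) b).const_mul (√(2 * a))).sub
    ((integrable_phi_mul_phi (a + 1) b).const_mul (√(2 * (a + 1))))).div_const 2).congr
    (ae_of_all _ fun x => ?_)
  simp only [phiDeriv, Pi.sub_apply]
  ring

theorem integrable_mul_phi_mul_phi (a b : ℕ) : Integrable fun x => x * phi a x * phi b x := by
  refine ((((integrable_phi_mul_phi (a - 1) b).const_mul (√(2 * a))).add
    ((integrable_phi_mul_phi (a + 1) b).const_mul (√(2 * (a + 1))))).div_const 2).congr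
    (ae_of_all _ fun x => ?_)
  simp only [mul_phi, Pi.add_apply]
  ring

theorem integrable_phi_mul_phiDeriv (a b : ℕ) : Integrable fun x => phi a x * phiDeriv b x :=
  (integrable_phiDeriv_mul_phi b a).congr (ae_of_all _ fun _ => mul_comm _ _)

theorem integral_phi_mul_phiDeriv (a b : ℕ) :
    ∫ x, phi a x * phiDeriv b x = -∫ x, phiDeriv a x * phi b x :=
  integral_mul_deriv_eq_deriv_mul_of_integrable (fun x _ => hasDerivAt_phi a x)
    (fun x _ => hasDerivAt_phi b x) (integrable_phi_mul_phiDeriv a b)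
    (integrable_phiDeriv_mul_phi a b) (integrable_phi_mul_phi a b)

theorem sqrt_mul_integral_phi_mul_phi_succ (a b : ℕ) :
    √(2 * (b + 1)) * ∫ x, phi a x * phi (b + 1) x
      = √(2 * a) * ∫ x, phi (a - 1) x * phi b x := by
  calc √(2 * (b + 1)) * ∫ x, phi a x * phi (b + 1) x
      = (∫ x, x * phi a x * phi b x) - ∫ x, phi a x * phiDeriv b x := by
        rw [← integral_const_mul, ← integral_sub (integrable_mul_phi_mul_phi a b)
          (integrable_phi_mul_phiDeriv a b)]
        congr 1
        funext x
        rw [phiDeriv]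
        linear_combination -phi a x * mul_phi b x
    _ = (∫ x, x * phi a x * phi b x) + ∫ x, phiDeriv a x * phi b x := by
        rw [integral_phi_mul_phiDeriv, sub_neg_eq_add]
    _ = √(2 * a) * ∫ x, phi (a - 1) x * phi b x := by
        rw [← integral_const_mul, ← integral_add (integrable_mul_phi_mul_phi a b)
          (integrable_phiDeriv_mul_phi a b)]
        congr 1
        funext x
        rw [phiDeriv]
        linear_combination phi b x * mul_phi a x

theorem integral_phi_zero_mul_phi_zero : ∫ x, phi 0 x * phi 0 x = 1 := by
  have h (x : ℝ) : phi 0 x * phi 0 x = (√π)⁻¹ * exp (-1 * x ^ 2) := by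
    rw [phi_eq, phiCoeff, show -1 * x ^ 2 = -x ^ 2 / 2 + -x ^ 2 / 2 by ring, exp_add]
    simp only [pow_zero, Nat.factorial_zero, Nat.cast_one, one_mul, hermiteP, mul_one]
    have hs : (√π)⁻¹ = (√(√π))⁻¹ * (√(√π))⁻¹ := by
      rw [← mul_inv, mul_self_sqrt (sqrt_nonneg π)]
    rw [hs]
    ring
  simp_rw [h]
  rw [integral_const_mul, integral_gaussian, div_one]
  exact inv_mul_cancel₀ (sqrt_ne_zero'.2 pi_pos)

theorem integral_phi_zero_mul_phi (b : ℕ) :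
    ∫ x, phi 0 x * phi b x = if 0 = b then 1 else 0 := by
  cases b with
  | zero => simpa using integral_phi_zero_mul_phi_zero
  | succ b =>
    have h := sqrt_mul_integral_phi_mul_phi_succ 0 b
    rw [Nat.cast_zero, mul_zero, sqrt_zero, zero_mul] at h
    simp [(mul_eq_zero.1 h).resolve_left (sqrt_pos.2 (by positivity)).ne']

theorem integral_phi_mul_phi (a b : ℕ) :
    ∫ x, phi a x * phi b x = if a = b then 1 else 0 := by
  induction a generalizing b with
  | zero => exact integral_phi_zero_mul_phi b
  | succ a ih =>
    cases b with
    | zero =>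
      simp_rw [mul_comm (phi (a + 1) _)]
      simpa [eq_comm] using integral_phi_zero_mul_phi (a + 1)
    | succ b =>
      have h := sqrt_mul_integral_phi_mul_phi_succ (a + 1) b
      rw [Nat.add_sub_cancel, ih b] at h
      refine mul_left_cancel₀ (sqrt_ne_zero'.2 (by positivity : (0 : ℝ) < 2 * (b + 1)))
        (h.trans ?_)
      by_cases hab : a = b <;> simp [hab]

theorem phi_even {n : ℕ} (hn : Even n) : (phi n).Even := fun x => by
  rw [phi_neg, hn.neg_one_pow, one_mul]

theorem integrable_phi_mul_signIntegral_phi (a m : ℕ) :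
    Integrable fun y => phi a y * signIntegral (phi m) y :=
  integrable_mul_signIntegral (integrable_phi a) (integrable_phi m) (continuous_phi m)

theorem integral_phiDeriv_mul_signIntegral_phi (a m : ℕ) :
    ∫ y, phiDeriv a y * signIntegral (phi m) y = if a = m then 2 else 0 := by
  have h := integral_mul_deriv_eq_deriv_mul_of_integrable (u := phi a) (u' := phiDeriv a)
    (v' := fun y => -2 * phi m y) (fun y _ => hasDerivAt_phi a y)
    (fun y _ => hasDerivAt_signIntegral (integrable_phi m) (continuous_phi m) y)
    (((integrable_phi_mul_phi a m).const_mul (-2)).congr (ae_of_all _ fun y => by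
      simp only [Pi.mul_apply]
      ring))
    (integrable_mul_signIntegral (integrable_phiDeriv a) (integrable_phi m) (continuous_phi m))
    (integrable_phi_mul_signIntegral_phi a m)
  simp_rw [mul_left_comm _ (-2 : ℝ)] at h
  rw [integral_const_mul, integral_phi_mul_phi] at h
  split_ifs at h ⊢ <;> linarith

theorem sqrt_mul_signIntegral_phi_succ (i : ℕ) (y : ℝ) :
    √(2 * (i + 1)) * signIntegral (phi (i + 1)) y
      = √(2 * i) * signIntegral (phi (i - 1)) y + 4 * phi i y := by
  have hderiv := signIntegral_of_hasDerivAt (hasDerivAt_phi i) (integrable_phi i)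
    (integrable_phiDeriv i) y
  have hlin : signIntegral (phiDeriv i) y = (√(2 * i) * signIntegral (phi (i - 1)) y
      - √(2 * (i + 1)) * signIntegral (phi (i + 1)) y) / 2 := by
    simp only [signIntegral, phiDeriv]
    rw [← integral_const_mul, ← integral_const_mul,
      ← integral_sub ((integrable_mul_sign_sub (integrable_phi _) y).const_mul _)
        ((integrable_mul_sign_sub (integrable_phi _) y).const_mul _), ← integral_div]
    congr 1
    funext x
    ring
  linarith

theorem alph_zero_right (j : ℕ) : alph j 0 = 0 := by
  simp [alph]

theorem alph_succ_succ (a m : ℕ) :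
    alph (a + 1) (m + 1) = ∫ y, phi a y * signIntegral (phi m) y := by
  simp only [alph, signIntegral, Nat.add_sub_cancel, Nat.add_eq_zero_iff, one_ne_zero,
    and_false, or_self, if_false]
  congr 1
  funext y
  rw [← integral_const_mul]
  congr 1
  funext x
  ring

theorem sqrt_mul_alph_add_two_sub (a m : ℕ) :
    √(2 * (a + 1)) * alph (a + 2) (m + 1) - √(2 * a) * alph a (m + 1)
      = if a = m then -4 else 0 := by
  have hlow : √(2 * a) * alph a (m + 1)
      = √(2 * a) * ∫ y, phi (a - 1) y * signIntegral (phi m) y := by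
    cases a with
    | zero => simp
    | succ a => rw [alph_succ_succ, Nat.add_sub_cancel]
  have hderiv : √(2 * (a + 1)) * alph (a + 2) (m + 1) - √(2 * a) * alph a (m + 1)
      = -2 * ∫ y, phiDeriv a y * signIntegral (phi m) y := by
    rw [hlow, alph_succ_succ, ← integral_const_mul, ← integral_const_mul,
      ← integral_const_mul, ← integral_sub ((integrable_phi_mul_signIntegral_phi _ m).const_mul _)
        ((integrable_phi_mul_signIntegral_phi _ m).const_mul _)]
    congr 1
    funext y
    rw [phiDeriv]
    ring
  rw [hderiv, integral_phiDeriv_mul_signIntegral_phi]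
  split_ifs <;> norm_num

theorem sqrt_mul_alph_add_two (a i : ℕ) :
    √(2 * (i + 1)) * alph (a + 1) (i + 2)
      = √(2 * i) * alph (a + 1) i + 4 * ∫ y, phi a y * phi i y := by
  have hlow : √(2 * i) * alph (a + 1) i
      = √(2 * i) * ∫ y, phi a y * signIntegral (phi (i - 1)) y := by
    cases i with
    | zero => simp
    | succ i => rw [alph_succ_succ, Nat.add_sub_cancel]
  rw [hlow, alph_succ_succ, ← integral_const_mul, ← integral_const_mul, ← integral_const_mul,
    ← integral_add ((integrable_phi_mul_signIntegral_phi a _).const_mul _)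
      ((integrable_phi_mul_phi a i).const_mul _)]
  congr 1
  funext y
  linear_combination phi a y * sqrt_mul_signIntegral_phi_succ i y

theorem alph_succ_one {n : ℕ} (hn : Even n) : alph (n + 1) 1 = 0 := by
  rw [alph_succ_succ]
  exact integral_eq_zero_of_odd
    ((phi_even hn).mul_odd (phi_even (n := 0) ⟨0, rfl⟩).signIntegral_odd)

theorem alph_succ_eq_zero {n : ℕ} (hn : Even n) : ∀ k ≤ n, alph (n + 1) k = 0
  | 0, _ => alph_zero_right _
  | 1, _ => alph_succ_one hn
  | k + 2, hk => by
    have h := sqrt_mul_alph_add_two n k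
    rw [alph_succ_eq_zero hn k (by omega), integral_phi_mul_phi, if_neg (by omega)] at h
    simp only [mul_zero, add_zero] at h
    exact (mul_eq_zero.1 h).resolve_left (sqrt_pos.2 (by positivity)).ne'

theorem sum_bet_succ_mul {n a : ℕ} (f : ℕ → ℝ) (ha : a + 1 ∈ Finset.Icc 1 n)
    (hf : f (n + 1) = 0) :
    ∑ l ∈ Finset.Icc 1 n, bet (a + 1) l * f l
      = √(2 * (a + 1)) * f (a + 2) - √(2 * a) * f a := by
  rw [Finset.mem_Icc] at ha
  rw [Finset.sum_eq_add (a + 2) a (by omega)]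
  · simp only [bet, if_neg (show a ≠ a + 1 + 1 by omega)]
    push_cast
    ring
  · intro l _ hl
    rw [bet, if_neg hl.1, if_neg (by omega), zero_mul]
  · intro h
    rw [show a + 2 = n + 1 by rw [Finset.mem_Icc] at h; omega, hf, mul_zero]
  · intro h
    obtain rfl : a = 0 := by rw [Finset.mem_Icc] at h; omega
    simp [bet]

theorem stmt9_general (n j k : ℕ) (hn : Even n)
    (hj : j ∈ Finset.Icc 1 n) (hk : k ∈ Finset.Icc 1 n) :
    ∑ l ∈ Finset.Icc 1 n, bet j l * alph l k = if j = k then -4 else 0 := by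
  obtain ⟨a, rfl⟩ : ∃ a, j = a + 1 := ⟨j - 1, by grind⟩
  obtain ⟨m, rfl⟩ : ∃ m, k = m + 1 := ⟨k - 1, by grind⟩
  rw [sum_bet_succ_mul (alph · (m + 1)) hj (alph_succ_eq_zero hn _ (Finset.mem_Icc.1 hk).2),
    sqrt_mul_alph_add_two_sub]
  simp

/-- for `n > 0` even and `j, k ∈ {1,…,n}`, `∑_{l=1}^n β_{j,l} α_{l,k} = -4 δ_{jk}`. -/
theorem stmt9 (n j k : ℕ) (hn : Even n) (h0 : 0 < n)
    (hj : j ∈ Finset.Icc 1 n) (hk : k ∈ Finset.Icc 1 n) :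
    ∑ l ∈ Finset.Icc 1 n, bet j l * alph l k = if j = k then -4 else 0 :=
  stmt9_general n j k hn hj hk
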